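/- arXiv:2406.04757 — 2 statements merged into one kernel-verified Lean document; each statement's English description precedes it below -/
import Mathlib

section
/- Let k be an integer with 1 ≤ k ≤ n(q-1) such that k is not congruent to 0 modulo q-1, and let ℓ = n(q-1) − k. Then the dual code of C_{n,k}^q equals C_{n,ℓ}^q. -/
open scoped BigOperators

/-- A vector in `F^(n+1)` is a standard representative if its leftmost nonzero
coordinate equals `1`. -/
def IsStdRep {F : Type*} [Field F] {n : ℕ} (v : Fin (n + 1) → F) : Prop :=
  ∃ i, (∀ j, j < i → v j = 0) ∧ v i = 1

/-- The set of standard affine representatives of the points of projective n-space. -/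
abbrev ProjPts (F : Type*) [Field F] (n : ℕ) : Type _ :=
  {v : Fin (n + 1) → F // IsStdRep v}

noncomputable instance {F : Type*} [Field F] [Fintype F] {n : ℕ} :
    Fintype (ProjPts F n) := Fintype.ofFinite _

/-- Evaluation of a polynomial at the standard representatives, as a linear map. -/
noncomputable def evalOnPts (F : Type*) [Field F] [Fintype F] (n : ℕ) :
    MvPolynomial (Fin (n + 1)) F →ₗ[F] (ProjPts F n → F) where
  toFun f := fun p => MvPolynomial.eval p.1 f
  map_add' f g := by ext p; simp
  map_smul' c f := by ext p; simp [MvPolynomial.smul_eval]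

/-- The projective Reed–Muller code `C_{n,k}^q`: evaluations of homogeneous degree-`k`
polynomials at the standard representatives of the points of `ℙ^n(F)`. -/
noncomputable def PRM (F : Type*) [Field F] [Fintype F] (n k : ℕ) :
    Submodule F (ProjPts F n → F) :=
  Submodule.map (evalOnPts F n) (MvPolynomial.homogeneousSubmodule (Fin (n + 1)) F k)

/-- The dual code with respect to the standard bilinear form. -/
noncomputable def dualCode {F : Type*} [Field F] [Fintype F] {n : ℕ}
    (C : Submodule F (ProjPts F n → F)) : Submodule F (ProjPts F n → F) where
  carrier := {y | ∀ c ∈ C, ∑ p : ProjPts F n, y p * c p = 0}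
  zero_mem' := by intro c hc; simp
  add_mem' := by
    intro a b ha hb c hc
    show ∑ p : ProjPts F n, (a + b) p * c p = 0
    simp only [Pi.add_apply, add_mul, Finset.sum_add_distrib, ha c hc, hb c hc, add_zero]
  smul_mem' := by
    intro r a ha c hc
    show ∑ p : ProjPts F n, (r • a) p * c p = 0
    simp only [Pi.smul_apply, smul_eq_mul, mul_assoc, ← Finset.mul_sum, ha c hc, mul_zero]

/-!
Write `r = q - 1` and `l = n r - k`. If `g` and `f` are forms of degrees `l` and `k`, then `g f`
has degree `n r < (n + 1) r`, so its sum over `𝔽_q^{n+1}` vanishes (Chevalley–Warning). Splitting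
`𝔽_q^{n+1} \ {0}` as `𝔽_q^× × P'` and using that `g f` is invariant under scaling and vanishes at
`0`, the sum over `P'` vanishes as well: `C_{n,l} ⊆ C_{n,k}^⊥`.

Equality is a dimension count. Reduced monomials `x^a` (all `a_i ≤ r`) are linearly independent as
functions on `𝔽_q^{n+1}`; those with `a ≠ 0` and `|a| ≡ d (mod r)` scale like `c^d`, hence are
still independent on `P'`. The `r` classes `d mod r` together have `q^{n+1} - 1 = r |P'|`
members, so each class has exactly `|P'|`. For `r ∤ d`, `C_{n,d}` is spanned by the reduced
monomials of the class of `d` with `|a| ≤ d`. Finally `a ↦ (r, …, r) - a` maps the monomials of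
the class of `k` with `|a| > k` bijectively onto those of the class of `l` with `|a| ≤ l`, so
`dim C_{n,k} + dim C_{n,l} = |P'|`.
-/

open MvPolynomial Finset Module

section FiniteFieldPow

variable {F : Type*} [Field F] [Fintype F]

theorem FiniteField.pow_eq_pow_of_modEq {x : F} (hx : x ≠ 0) {e e' : ℕ}
    (h : e ≡ e' [MOD Fintype.card F - 1]) : x ^ e = x ^ e' := by
  have h' : e % (Fintype.card F - 1) = e' % (Fintype.card F - 1) := h
  rw [← Nat.div_add_mod e (Fintype.card F - 1), ← Nat.div_add_mod e' (Fintype.card F - 1),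
    h', pow_add, pow_add, pow_mul, pow_mul, FiniteField.pow_card_sub_one_eq_one x hx,
    one_pow, one_pow]

theorem FiniteField.pow_eq_pow_of_modEq_of_eq_zero_iff (x : F) {e e' : ℕ}
    (h : e ≡ e' [MOD Fintype.card F - 1]) (h0 : e = 0 ↔ e' = 0) : x ^ e = x ^ e' := by
  rcases eq_or_ne x 0 with rfl | hx
  · by_cases he : e = 0
    · rw [he, h0.mp he]
    · rw [zero_pow he, zero_pow (mt h0.mpr he)]
  · exact pow_eq_pow_of_modEq hx h

end FiniteFieldPow

namespace IsStdRep

variable {F : Type*} [Field F] {n : ℕ} {v w : Fin (n + 1) → F}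

theorem ne_zero (hv : IsStdRep v) : v ≠ 0 := by
  obtain ⟨i, -, hi⟩ := hv
  rintro rfl
  exact zero_ne_one hi

theorem eq_of_smul_eq_smul (hv : IsStdRep v) (hw : IsStdRep w) {c d : F} (hc : c ≠ 0)
    (hd : d ≠ 0) (h : c • v = d • w) : c = d ∧ v = w := by
  obtain ⟨i, hvi, hi⟩ := hv
  obtain ⟨j, hwj, hj⟩ := hw
  have hcoord : ∀ m, c * v m = d * w m := fun m => congrFun h m
  have hij : i = j := by
    rcases lt_trichotomy i j with hlt | heq | hgt
    · have := hcoord i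
      rw [hi, hwj i hlt] at this
      simp [hc] at this
    · exact heq
    · have := hcoord j
      rw [hj, hvi j hgt, mul_zero, mul_one] at this
      exact absurd this.symm hd
  subst hij
  have hcd : c = d := by simpa [hi, hj] using hcoord i
  subst hcd
  exact ⟨rfl, smul_right_injective _ hc h⟩

theorem exists_smul_eq (hv : v ≠ 0) : ∃ c ≠ (0 : F), ∃ w, IsStdRep w ∧ c • w = v := by
  obtain ⟨i, hi, hmin⟩ := wellFounded_lt.has_min {i | v i ≠ 0} (Function.ne_iff.mp hv)
  refine ⟨v i, hi, (v i)⁻¹ • v, ⟨i, fun j hj => ?_, inv_mul_cancel₀ hi⟩, smul_inv_smul₀ hi v⟩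
  rw [Pi.smul_apply, not_not.mp fun hvj => hmin j hvj hj, smul_zero]

end IsStdRep

namespace ProjectiveReedMuller

section Points

variable (F : Type*) [Field F] [Fintype F] (n : ℕ)

noncomputable def unitsSmulEquiv : Fˣ × ProjPts F n ≃ {v : Fin (n + 1) → F // v ≠ 0} :=
  Equiv.ofBijective
    (fun cp => ⟨(cp.1 : F) • cp.2.1, smul_ne_zero cp.1.ne_zero cp.2.2.ne_zero⟩)
    ⟨fun ⟨c, p⟩ ⟨d, p'⟩ h => by
      obtain ⟨hcd, hpp⟩ :=
        p.2.eq_of_smul_eq_smul p'.2 c.ne_zero d.ne_zero (congrArg Subtype.val h)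
      exact Prod.ext (Units.ext hcd) (Subtype.ext hpp),
     fun ⟨v, hv⟩ => by
      obtain ⟨c, hc, w, hw, rfl⟩ := IsStdRep.exists_smul_eq hv
      exact ⟨(Units.mk0 c hc, ⟨w, hw⟩), rfl⟩⟩

variable {F n}

theorem sum_eq_add_sum_units_smul [DecidableEq F] {M : Type*} [AddCommMonoid M]
    (f : (Fin (n + 1) → F) → M) :
    ∑ v, f v = f 0 + ∑ c : Fˣ, ∑ p : ProjPts F n, f ((c : F) • p.1) := by
  rw [Fintype.sum_eq_add_sum_subtype_ne f 0, ← Fintype.sum_prod_type',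
    ← (unitsSmulEquiv F n).sum_comp]
  rfl

variable (F n) in
theorem card_sub_one_mul_card_projPts :
    (Fintype.card F - 1) * Fintype.card (ProjPts F n) = Fintype.card F ^ (n + 1) - 1 := by
  classical
  rw [← Fintype.card_units, ← Fintype.card_prod, Fintype.card_congr (unitsSmulEquiv F n),
    Fintype.card_subtype_compl, Fintype.card_subtype_eq, Fintype.card_fun, Fintype.card_fin]

end Points

variable {F : Type*} [Field F] [Fintype F] {n : ℕ}

theorem eval_smul_of_degree_modEq {σ : Type*} [Fintype σ] {P : MvPolynomial σ F} {k : ℕ}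
    (hP : ∀ a ∈ P.support, a.degree ≡ k [MOD Fintype.card F - 1]) {c : F} (hc : c ≠ 0)
    (v : σ → F) : eval (c • v) P = c ^ k * eval v P := by
  simp only [eval_eq', Finset.mul_sum]
  refine Finset.sum_congr rfl fun a ha => ?_
  simp only [Pi.smul_apply, smul_eq_mul, mul_pow, Finset.prod_mul_distrib,
    Finset.prod_pow_eq_pow_sum, ← Finsupp.degree_eq_sum,
    FiniteField.pow_eq_pow_of_modEq hc (hP a ha)]
  ring

theorem sum_eval_projPts_eq_zero (hn : 1 ≤ n) {h : MvPolynomial (Fin (n + 1)) F}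
    (hh : h.IsHomogeneous (n * (Fintype.card F - 1))) :
    ∑ p : ProjPts F n, eval p.1 h = 0 := by
  classical
  have hq : 1 < Fintype.card F := Fintype.one_lt_card
  have hdeg : ∀ a ∈ h.support, a.degree = n * (Fintype.card F - 1) := fun a ha => by
    rw [Finsupp.degree_eq_weight_one]; exact hh (mem_support_iff.mp ha)
  have hinv : ∀ (c : Fˣ) (p : ProjPts F n), eval ((c : F) • p.1) h = eval p.1 h := by
    intro c p
    rw [eval_smul_of_degree_modEq (k := 0) (fun a ha => ?_) c.ne_zero, pow_zero, one_mul]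
    rw [hdeg a ha]
    exact Nat.modEq_zero_iff_dvd.mpr (dvd_mul_left _ _)
  have hzero : eval 0 h = 0 := by
    rw [MvPolynomial.eval_zero, constantCoeff_eq]
    exact hh.coeff_eq_zero (by simp; omega)
  have hsum : ∑ v, eval v h = 0 := by
    refine MvPolynomial.sum_eval_eq_zero h ?_
    rw [Fintype.card_fin]
    calc h.totalDegree ≤ n * (Fintype.card F - 1) := hh.totalDegree_le
      _ < (Fintype.card F - 1) * (n + 1) := by rw [Nat.mul_succ, mul_comm]; omega
  rw [sum_eq_add_sum_units_smul, hzero, zero_add] at hsum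
  simpa only [hinv, Finset.sum_const, Finset.card_univ, Fintype.card_units, nsmul_eq_mul,
    Nat.cast_pred (by omega : 0 < Fintype.card F), FiniteField.cast_card_eq_zero, zero_sub,
    neg_one_mul, neg_eq_zero] using hsum

theorem PRM_le_dualCode {k l : ℕ} (hn : 1 ≤ n) (hkl : l + k = n * (Fintype.card F - 1)) :
    PRM F n l ≤ dualCode (PRM F n k) := by
  rintro _ ⟨g, hg, rfl⟩ _ ⟨f, hf, rfl⟩
  have hgf : (g * f).IsHomogeneous (n * (Fintype.card F - 1)) := hkl ▸ hg.mul hf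
  simpa [evalOnPts] using sum_eval_projPts_eq_zero hn hgf

theorem finrank_dualCode_add_finrank (C : Submodule F (ProjPts F n → F)) :
    finrank F (dualCode C) + finrank F C = Fintype.card (ProjPts F n) := by
  classical
  have hdual :
      dualCode C = C.dualAnnihilator.comap (dotProductEquiv F (ProjPts F n)).toLinearMap := by
    ext y
    simp [dualCode, Submodule.mem_dualAnnihilator, dotProduct]
  rw [hdual, Submodule.comap_equiv_eq_map_symm, LinearEquiv.finrank_map_eq, add_comm,
    Subspace.finrank_add_finrank_dualAnnihilator_eq, finrank_fintype_fun_eq_card]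

section Exponents

variable {σ : Type*} {r k l : ℕ} {a b : σ →₀ ℕ}

theorem ne_zero_of_degree_modEq (h : a.degree ≡ k [MOD r]) (hk : ¬ r ∣ k) : a ≠ 0 := by
  rintro rfl
  exact hk (Nat.modEq_zero_iff_dvd.mp (by simpa using h.symm))

variable [Fintype σ]

variable (r) in
noncomputable def complExps (a : σ →₀ ℕ) : σ →₀ ℕ :=
  Finsupp.equivFunOnFinite.symm fun i => r - a i

theorem complExps_apply (i : σ) : complExps r a i = r - a i := rfl

theorem complExps_complExps (ha : ∀ i, a i ≤ r) : complExps r (complExps r a) = a := by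
  ext i
  simp only [complExps_apply]
  have := ha i
  omega

theorem degree_complExps_add (ha : ∀ i, a i ≤ r) :
    (complExps r a).degree + a.degree = Fintype.card σ * r := by
  rw [Finsupp.degree_eq_sum, Finsupp.degree_eq_sum, ← sum_add_distrib]
  simp only [complExps_apply, fun i => Nat.sub_add_cancel (ha i), sum_const, card_univ,
    smul_eq_mul]

theorem degree_complExps_modEq (ha : ∀ i, a i ≤ r) (hkl : k + l + r = Fintype.card σ * r)
    (h : a.degree ≡ k [MOD r]) : (complExps r a).degree ≡ l [MOD r] := by
  refine h.add_left_cancel ?_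
  rw [add_comm, degree_complExps_add ha, ← hkl]
  exact Nat.add_modEq_right

variable [DecidableEq σ]

variable (σ r) in
noncomputable def reducedExps : Finset (σ →₀ ℕ) := Iic (Finsupp.equivFunOnFinite.symm fun _ => r)

theorem mem_reducedExps : a ∈ reducedExps σ r ↔ ∀ i, a i ≤ r := by
  simp [reducedExps, Finsupp.le_def]

theorem card_reducedExps : #(reducedExps σ r) = (r + 1) ^ Fintype.card σ := by
  rcases eq_or_ne r 0 with rfl | hr
  · simp [reducedExps, Finsupp.card_Iic]
  · have hsupp : (Finsupp.equivFunOnFinite.symm fun _ : σ => r).support = univ := by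
      ext i
      simp [hr]
    simp [reducedExps, Finsupp.card_Iic, hsupp]

variable (σ r k) in
noncomputable def homExps : Finset (σ →₀ ℕ) :=
  ((reducedExps σ r).erase 0).filter (·.degree ≡ k [MOD r])

theorem mem_homExps : a ∈ homExps σ r k ↔ (∀ i, a i ≤ r) ∧ a ≠ 0 ∧ a.degree ≡ k [MOD r] := by
  simp only [homExps, mem_filter, mem_erase, mem_reducedExps]
  tauto

variable (σ r k) in
noncomputable def lowExps : Finset (σ →₀ ℕ) := (homExps σ r k).filter (·.degree ≤ k)

theorem mem_lowExps : a ∈ lowExps σ r k ↔ a ∈ homExps σ r k ∧ a.degree ≤ k := mem_filter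

theorem homExps_mod : homExps σ r (k % r) = homExps σ r k := by
  ext a
  simp only [mem_homExps, Nat.ModEq, Nat.mod_mod]

theorem sum_card_homExps (hr : 0 < r) :
    ∑ j ∈ range r, #(homExps σ r j) = (r + 1) ^ Fintype.card σ - 1 := by
  have hzero : (0 : σ →₀ ℕ) ∈ reducedExps σ r := mem_reducedExps.mpr fun _ => Nat.zero_le _
  rw [← card_reducedExps, ← card_erase_of_mem hzero,
    card_eq_sum_card_fiberwise (f := (·.degree % r)) (t := range r)
      fun a _ => mem_range.mpr (Nat.mod_lt _ hr)]
  refine sum_congr rfl fun j hj => congrArg card (filter_congr fun a _ => ?_)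
  rw [Nat.ModEq, Nat.mod_eq_of_lt (mem_range.mp hj)]

theorem complExps_mem_lowExps (hk : ¬ r ∣ k) (hkl : k + l + r = Fintype.card σ * r)
    (ha : a ∈ homExps σ r k) (hlt : k < a.degree) : complExps r a ∈ lowExps σ r l := by
  obtain ⟨hred, -, hmod⟩ := mem_homExps.mp ha
  have hl : ¬ r ∣ l := fun hl =>
    hk ((Nat.dvd_add_left hl).mp ((Nat.dvd_add_left (dvd_refl r)).mp (hkl ▸ dvd_mul_left r _)))
  have hmod' := degree_complExps_modEq hred hkl hmod
  have hsum := degree_complExps_add hred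
  have hgap := hmod.symm.add_le_of_lt hlt
  exact mem_lowExps.mpr ⟨mem_homExps.mpr ⟨fun i => Nat.sub_le _ _,
    ne_zero_of_degree_modEq hmod' hl, hmod'⟩, by omega⟩

theorem complExps_mem_homExps (hk : ¬ r ∣ k) (hkl : k + l + r = Fintype.card σ * r)
    (hb : b ∈ lowExps σ r l) : complExps r b ∈ homExps σ r k ∧ k < (complExps r b).degree := by
  obtain ⟨hb, hle⟩ := mem_lowExps.mp hb
  obtain ⟨hred, hne, hmod⟩ := mem_homExps.mp hb
  have hr : r ≠ 0 := by
    rintro rfl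
    exact hne (Finsupp.ext fun i => Nat.le_zero.mp (hred i))
  have hmod' := degree_complExps_modEq (l := k) hred (by omega) hmod
  have hsum := degree_complExps_add hred
  exact ⟨mem_homExps.mpr ⟨fun i => Nat.sub_le _ _, ne_zero_of_degree_modEq hmod' hk, hmod'⟩,
    by omega⟩

theorem card_homExps_eq_card_lowExps_add (hk : ¬ r ∣ k) (hkl : k + l + r = Fintype.card σ * r) :
    #(homExps σ r k) = #(lowExps σ r k) + #(lowExps σ r l) := by
  rw [← card_filter_add_card_filter_not (s := homExps σ r k) (·.degree ≤ k)]
  congr 1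
  refine card_nbij' (complExps r) (complExps r) (fun a ha => ?_) (fun b hb => ?_)
    (fun a ha => ?_) (fun b hb => ?_)
  · obtain ⟨ha, hlt⟩ := mem_filter.mp ha
    exact complExps_mem_lowExps hk hkl ha (not_le.mp hlt)
  · obtain ⟨hmem, hlt⟩ := complExps_mem_homExps hk hkl hb
    exact mem_filter.mpr ⟨hmem, not_le.mpr hlt⟩
  · exact complExps_complExps (mem_homExps.mp (mem_filter.mp ha).1).1
  · exact complExps_complExps (mem_homExps.mp (mem_lowExps.mp hb).1).1

end Exponents

theorem exists_reduced_exponent {r : ℕ} (hr : 0 < r) (e : ℕ) :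
    ∃ e' ≤ r, e' ≤ e ∧ (e' = 0 ↔ e = 0) ∧ e' ≡ e [MOD r] := by
  rcases Nat.eq_zero_or_pos e with rfl | he
  · exact ⟨0, Nat.zero_le _, le_rfl, Iff.rfl, rfl⟩
  · have hle := Nat.mod_le (e - 1) r
    refine ⟨(e - 1) % r + 1, Nat.mod_lt _ hr, by omega, ⟨fun h => by omega, fun h => by omega⟩,
      ?_⟩
    calc (e - 1) % r + 1 ≡ e - 1 + 1 [MOD r] := (Nat.mod_modEq _ _).add_right 1
      _ = e := Nat.sub_add_cancel he

theorem exists_reduced_exps {σ : Type*} [Finite σ] {r : ℕ} (hr : 0 < r) (b : σ →₀ ℕ) :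
    ∃ a : σ →₀ ℕ, ∀ i, a i ≤ r ∧ a i ≤ b i ∧ (a i = 0 ↔ b i = 0) ∧ a i ≡ b i [MOD r] := by
  choose f hf using exists_reduced_exponent hr
  exact ⟨Finsupp.equivFunOnFinite.symm fun i => f (b i), fun i => hf (b i)⟩

variable {F : Type*} [Field F] [Fintype F] {n k : ℕ}

theorem eval_monomial_eq_of_modEq {σ : Type*} [Fintype σ] {a b : σ →₀ ℕ}
    (h : ∀ i, (a i = 0 ↔ b i = 0) ∧ a i ≡ b i [MOD Fintype.card F - 1]) (c : F) (v : σ → F) :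
    eval v (monomial a c) = eval v (monomial b c) := by
  simp only [eval_monomial, Finsupp.prod_fintype _ _ (fun _ => pow_zero _)]
  congr 1
  exact prod_congr rfl fun i _ =>
    FiniteField.pow_eq_pow_of_modEq_of_eq_zero_iff _ (h i).2 (h i).1

theorem evalOnPts_monomial_eq_of_modEq {a b : Fin (n + 1) →₀ ℕ}
    (h : ∀ i, (a i = 0 ↔ b i = 0) ∧ a i ≡ b i [MOD Fintype.card F - 1]) (c : F) :
    evalOnPts F n (monomial a c) = evalOnPts F n (monomial b c) :=
  funext fun p => eval_monomial_eq_of_modEq h c p.1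

theorem eq_zero_of_evalOnPts_eq_zero {P : MvPolynomial (Fin (n + 1)) F}
    (hP : P ∈ restrictSupport F ↑(homExps (Fin (n + 1)) (Fintype.card F - 1) k))
    (h0 : evalOnPts F n P = 0) : P = 0 := by
  have hsupp : ∀ a ∈ P.support, a ∈ homExps (Fin (n + 1)) (Fintype.card F - 1) k :=
    fun a ha => hP ha
  have hq : 0 < Fintype.card F := Fintype.card_pos
  refine eq_zero_of_eval_zero_at_prod_finset P (fun _ => univ) (fun i => ?_) (fun v _ => ?_)
  · rw [card_univ, degreeOf_lt_iff hq]
    exact fun a ha => Nat.lt_of_le_of_lt ((mem_homExps.mp (hsupp a ha)).1 i) (by omega)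
  rcases eq_or_ne v 0 with rfl | hv
  · rw [MvPolynomial.eval_zero, constantCoeff_eq, ← MvPolynomial.notMem_support_iff]
    exact fun h => (mem_homExps.mp (hsupp 0 h)).2.1 rfl
  · obtain ⟨c, hc, w, hw, rfl⟩ := IsStdRep.exists_smul_eq hv
    rw [eval_smul_of_degree_modEq (fun a ha => (mem_homExps.mp (hsupp a ha)).2.2) hc]
    have hw0 : eval w P = 0 := congrFun h0 ⟨w, hw⟩
    rw [hw0, mul_zero]

theorem finrank_map_evalOnPts {s : Finset (Fin (n + 1) →₀ ℕ)}
    (hs : s ⊆ homExps (Fin (n + 1)) (Fintype.card F - 1) k) :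
    finrank F (Submodule.map (evalOnPts F n) (restrictSupport F ↑s)) = #s := by
  set W := restrictSupport F (↑s : Set (Fin (n + 1) →₀ ℕ))
  have hinj : Function.Injective ((evalOnPts F n).comp W.subtype) := by
    rw [← LinearMap.ker_eq_bot, LinearMap.ker_eq_bot']
    exact fun P hP => Subtype.ext
      (eq_zero_of_evalOnPts_eq_zero (restrictSupport_mono F (by exact_mod_cast hs) P.2) hP)
  rw [← Submodule.range_subtype W, ← LinearMap.range_comp, LinearMap.finrank_range_of_inj hinj,
    finrank_eq_card_basis (basisRestrictSupport F _)]
  simp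

theorem card_homExps_le_card_projPts (k : ℕ) :
    #(homExps (Fin (n + 1)) (Fintype.card F - 1) k) ≤ Fintype.card (ProjPts F n) := by
  rw [← finrank_map_evalOnPts (F := F) subset_rfl]
  exact (Submodule.finrank_le _).trans_eq (finrank_fintype_fun_eq_card F)

theorem card_homExps_eq_card_projPts (k : ℕ) :
    #(homExps (Fin (n + 1)) (Fintype.card F - 1) k) = Fintype.card (ProjPts F n) := by
  have hq : 1 < Fintype.card F := Fintype.one_lt_card
  have hr : 0 < Fintype.card F - 1 := by omega
  have hsum : ∑ j ∈ range (Fintype.card F - 1), #(homExps (Fin (n + 1)) (Fintype.card F - 1) j)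
      = ∑ j ∈ range (Fintype.card F - 1), Fintype.card (ProjPts F n) := by
    rw [sum_card_homExps hr, sum_const, card_range, smul_eq_mul, card_sub_one_mul_card_projPts,
      Fintype.card_fin, Nat.sub_add_cancel hq.le]
  rw [← homExps_mod]
  exact (sum_eq_sum_iff_of_le fun j _ => card_homExps_le_card_projPts j).mp hsum _
    (mem_range.mpr (Nat.mod_lt _ hr))

theorem evalOnPts_monomial_mem_map_lowExps (hk : ¬ (Fintype.card F - 1) ∣ k)
    {b : Fin (n + 1) →₀ ℕ} (hb : b.degree = k) :
    evalOnPts F n (monomial b 1) ∈ Submodule.map (evalOnPts F n)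
      (restrictSupport F ↑(lowExps (Fin (n + 1)) (Fintype.card F - 1) k)) := by
  have hr : 0 < Fintype.card F - 1 := by have := Fintype.one_lt_card (α := F); omega
  obtain ⟨a, ha⟩ := exists_reduced_exps hr b
  have hmod : a.degree ≡ k [MOD Fintype.card F - 1] := by
    rw [← hb, Finsupp.degree_eq_sum, Finsupp.degree_eq_sum]
    exact Nat.ModEq.sum fun i _ => (ha i).2.2.2
  have hle : a.degree ≤ k := by
    rw [← hb, Finsupp.degree_eq_sum, Finsupp.degree_eq_sum]
    exact sum_le_sum fun i _ => (ha i).2.1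
  rw [evalOnPts_monomial_eq_of_modEq fun i => ⟨(ha i).2.2.1.symm, (ha i).2.2.2.symm⟩]
  refine Submodule.mem_map_of_mem ((monomial_mem_restrictSupport F).mpr (Or.inl ?_))
  exact mem_lowExps.mpr
    ⟨mem_homExps.mpr ⟨fun i => (ha i).1, ne_zero_of_degree_modEq hmod hk, hmod⟩, hle⟩

theorem evalOnPts_monomial_mem_PRM {a : Fin (n + 1) →₀ ℕ}
    (ha : a ∈ lowExps (Fin (n + 1)) (Fintype.card F - 1) k) :
    evalOnPts F n (monomial a 1) ∈ PRM F n k := by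
  obtain ⟨ha, hle⟩ := mem_lowExps.mp ha
  obtain ⟨-, hne, hmod⟩ := mem_homExps.mp ha
  obtain ⟨i, hi⟩ : ∃ i, a i ≠ 0 := by simpa using Finsupp.ne_iff.mp hne
  have hdvd := (Nat.modEq_iff_dvd' hle).mp hmod
  rw [evalOnPts_monomial_eq_of_modEq (b := a + Finsupp.single i (k - a.degree)) fun j => ?_]
  · refine Submodule.mem_map_of_mem (isHomogeneous_monomial _ ?_)
    rw [map_add, Finsupp.degree_single]
    omega
  · by_cases hj : j = i
    · subst hj
      simp only [Finsupp.add_apply, Finsupp.single_eq_same]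
      exact ⟨by omega, by simpa using (Nat.modEq_zero_iff_dvd.mpr hdvd).add_left (a j)⟩
    · rw [Finsupp.add_apply, Finsupp.single_apply, if_neg (Ne.symm hj), add_zero]
      exact ⟨Iff.rfl, Nat.ModEq.refl _⟩

theorem PRM_eq_map_lowExps (hk : ¬ (Fintype.card F - 1) ∣ k) :
    PRM F n k = Submodule.map (evalOnPts F n)
      (restrictSupport F ↑(lowExps (Fin (n + 1)) (Fintype.card F - 1) k)) := by
  apply le_antisymm
  · rw [PRM, homogeneousSubmodule_eq_finsupp_supported, ← restrictSupport,
      restrictSupport_eq_span, Submodule.map_span_le]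
    rintro _ ⟨b, hb, rfl⟩
    exact evalOnPts_monomial_mem_map_lowExps hk hb
  · rw [restrictSupport_eq_span, Submodule.map_span_le]
    rintro _ ⟨a, ha, rfl⟩
    exact evalOnPts_monomial_mem_PRM ha

theorem finrank_PRM (hk : ¬ (Fintype.card F - 1) ∣ k) :
    finrank F (PRM F n k) = #(lowExps (Fin (n + 1)) (Fintype.card F - 1) k) := by
  rw [PRM_eq_map_lowExps hk, finrank_map_evalOnPts fun a ha => (mem_lowExps.mp ha).1]

theorem finrank_PRM_add_finrank_PRM {l : ℕ} (hk : ¬ (Fintype.card F - 1) ∣ k)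
    (hkl : l + k = n * (Fintype.card F - 1)) :
    finrank F (PRM F n k) + finrank F (PRM F n l) = Fintype.card (ProjPts F n) := by
  have hl : ¬ (Fintype.card F - 1) ∣ l := fun hl =>
    hk ((Nat.dvd_add_right hl).mp (hkl ▸ dvd_mul_left _ n))
  rw [finrank_PRM hk, finrank_PRM hl, ← card_homExps_eq_card_projPts k,
    card_homExps_eq_card_lowExps_add (l := l) hk (by rw [Fintype.card_fin, Nat.succ_mul]; omega)]

end ProjectiveReedMuller

open ProjectiveReedMuller

theorem stmt5_general (q n : ℕ) (F : Type*) [Field F] [Fintype F]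
    (hq : Fintype.card F = q) (hn : 1 ≤ n) (k : ℕ) (hk2 : k ≤ n * (q - 1))
    (hkd : ¬ (q - 1) ∣ k) :
    dualCode (PRM F n k) = PRM F n (n * (q - 1) - k) := by
  subst hq
  have hkl : n * (Fintype.card F - 1) - k + k = n * (Fintype.card F - 1) := Nat.sub_add_cancel hk2
  refine (Submodule.eq_of_le_of_finrank_le (PRM_le_dualCode hn hkl) ?_).symm
  have hdual := finrank_dualCode_add_finrank (PRM F n k)
  have hcount := finrank_PRM_add_finrank_PRM hkd hkl
  omega

theorem stmt5 (q n : ℕ) (F : Type*) [Field F] [Fintype F] [DecidableEq F]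
    (hq : Fintype.card F = q) (hn : 1 ≤ n) (k : ℕ) (hk1 : 1 ≤ k) (hk2 : k ≤ n * (q - 1))
    (hkd : ¬ (q - 1) ∣ k) :
    dualCode (PRM F n k) = PRM F n (n * (q - 1) - k) :=
  stmt5_general q n F hq hn k hk2 hkd
end

section
/- Suppose 1 ≤ k ≤ n(q-1)/2 and 2k ≡ 0 (mod q-1). Then C_{n,k}^q ⊆ (C_{n,k}^q)^⊥, and hence Hull(C_{n,k}^q) = C_{n,k}^q. -/
open scoped BigOperators

section helpers

variable {F : Type*} [Field F] [Fintype F] {n : ℕ}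

lemma eval_smul_homog {σ : Type*} [Fintype σ]
    {f : MvPolynomial σ F} {d : ℕ} (hf : f.IsHomogeneous d) (c : F) (x : σ → F) :
    MvPolynomial.eval (c • x) f = c ^ d * MvPolynomial.eval x f := by
  rw [MvPolynomial.eval_eq', MvPolynomial.eval_eq', Finset.mul_sum]
  apply Finset.sum_congr rfl
  intro m hm
  have hdeg : ∑ i, m i = d := by
    have := hf (MvPolynomial.mem_support_iff.mp hm)
    simpa [Finsupp.weight_apply, Finsupp.sum_fintype, smul_eq_mul] using this
  have key : ∏ i, ((c • x) i) ^ m i = c ^ d * ∏ i, x i ^ m i := by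
    calc ∏ i, ((c • x) i) ^ m i = ∏ i, (c ^ m i * x i ^ m i) := by
          simp [mul_pow]
      _ = (∏ i, c ^ m i) * ∏ i, x i ^ m i := Finset.prod_mul_distrib
      _ = c ^ d * ∏ i, x i ^ m i := by rw [Finset.prod_pow_eq_pow_sum, hdeg]
  rw [key]; ring

lemma IsStdRep.ne_zero' {v : Fin (n + 1) → F} (hv : IsStdRep v) : v ≠ 0 := by
  obtain ⟨i, -, hi⟩ := hv
  intro h
  rw [h] at hi
  simpa using hi

open Finset in
noncomputable def reprEquiv (F : Type*) [Field F] [Fintype F] (n : ℕ) :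
    Fˣ × ProjPts F n ≃ {v : Fin (n + 1) → F // v ≠ 0} := by
  classical
  refine Equiv.ofBijective
    (fun cp => ⟨(cp.1 : F) • cp.2.1, fun h => cp.2.2.ne_zero' (by
      have := congrArg (fun w => ((cp.1⁻¹ : Fˣ) : F) • w) h
      simpa [smul_smul] using this)⟩) ⟨?_, ?_⟩
  · rintro ⟨c, p⟩ ⟨c', p'⟩ h
    obtain ⟨i, hi0, hi1⟩ := p.2
    obtain ⟨i', hi0', hi1'⟩ := p'.2
    have hval : ∀ j, (c : F) * p.1 j = (c' : F) * p'.1 j := fun j => by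
      have := congrFun (Subtype.ext_iff.mp h) j
      simpa using this
    have hii : i = i' := by
      rcases lt_trichotomy i i' with hlt | he | hgt
      · exfalso
        have := hval i
        rw [hi1, hi0' i hlt, mul_one, mul_zero] at this
        exact c.ne_zero this
      · exact he
      · exfalso
        have := hval i'
        rw [hi1', hi0 i' hgt, mul_one, mul_zero] at this
        exact c'.ne_zero this.symm
    have hcc : c = c' := by
      have := hval i
      rw [hi1, hii, hi1'] at this
      exact Units.ext (by simpa using this)
    subst hcc
    have hpp : p.1 = p'.1 := by
      funext j
      have := hval j
      exact mul_left_cancel₀ c.ne_zero this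
    exact Prod.ext rfl (Subtype.ext hpp)
  · rintro ⟨v, hv⟩
    have hne : (univ.filter (fun i => v i ≠ 0)).Nonempty := by
      by_contra h
      apply hv
      funext j
      by_contra hj
      exact h ⟨j, mem_filter.mpr ⟨mem_univ j, hj⟩⟩
    set i := (univ.filter (fun i => v i ≠ 0)).min' hne with hi
    have hvi : v i ≠ 0 := (mem_filter.mp ((univ.filter (fun i => v i ≠ 0)).min'_mem hne)).2
    have hlt : ∀ j, j < i → v j = 0 := by
      intro j hj
      by_contra hjne
      exact absurd (min'_le _ j (mem_filter.mpr ⟨mem_univ j, hjne⟩)) (not_le.mpr hj)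
    refine ⟨⟨Units.mk0 (v i) hvi, ⟨(v i)⁻¹ • v, ⟨i, ?_, ?_⟩⟩⟩, ?_⟩
    · intro j hj; simp [hlt j hj]
    · simp [inv_mul_cancel₀ hvi]
    · apply Subtype.ext
      show (v i) • ((v i)⁻¹ • v) = v
      rw [smul_smul, mul_inv_cancel₀ hvi, one_smul]

lemma sum_eval_projPts_eq_zero (q : ℕ) (hq : Fintype.card F = q) {d : ℕ}
    {f : MvPolynomial (Fin (n + 1)) F} (hf : f.IsHomogeneous d)
    (hd1 : 1 ≤ d) (hd2 : d ≤ n * (q - 1)) (hdd : (q - 1) ∣ d) :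
    ∑ p : ProjPts F n, MvPolynomial.eval p.1 f = 0 := by
  classical
  have hq2 : 2 ≤ q := hq ▸ Fintype.one_lt_card
  have htot : f.totalDegree < (Fintype.card F - 1) * Fintype.card (Fin (n + 1)) := by
    rw [hq, Fintype.card_fin]
    calc f.totalDegree ≤ d := hf.totalDegree_le
      _ ≤ n * (q - 1) := hd2
      _ < (q - 1) * (n + 1) := by
          rw [mul_comm n (q - 1), Nat.mul_add, Nat.mul_one]
          omega
  have hCW : ∑ x : Fin (n + 1) → F, MvPolynomial.eval x f = 0 :=
    MvPolynomial.sum_eval_eq_zero f htot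
  have h0 : MvPolynomial.eval (0 : Fin (n + 1) → F) f = 0 := by
    rw [RingHom.congr_fun MvPolynomial.eval_zero f]
    by_contra hc
    have := hf hc
    rw [map_zero] at this
    omega
  -- each unit to the d-th power is 1
  have hpow : ∀ c : Fˣ, (c : F) ^ d = 1 := by
    intro c
    obtain ⟨m, rfl⟩ := hdd
    rw [pow_mul, ← hq, FiniteField.pow_card_sub_one_eq_one (c : F) c.ne_zero, one_pow]
  -- rewrite the full sum using the bijection
  have hbij : ∑ x : Fin (n + 1) → F, MvPolynomial.eval x f
      = ((q - 1 : ℕ) : F) * ∑ p : ProjPts F n, MvPolynomial.eval p.1 f := by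
    rw [← Finset.sum_erase (f := fun v : Fin (n + 1) → F => MvPolynomial.eval v f)
          Finset.univ h0,
        Finset.sum_subtype (Finset.univ.erase (0 : Fin (n + 1) → F))
          (p := fun v => v ≠ 0) (by simp) (fun v => MvPolynomial.eval v f),
        ← Equiv.sum_comp (reprEquiv F n)
          (fun v : {v : Fin (n + 1) → F // v ≠ 0} => MvPolynomial.eval v.1 f)]
    have : ∀ cp : Fˣ × ProjPts F n,
        MvPolynomial.eval ((reprEquiv F n cp) : Fin (n + 1) → F) f
          = MvPolynomial.eval cp.2.1 f := by
      intro cp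
      show MvPolynomial.eval ((cp.1 : F) • cp.2.1) f = _
      rw [eval_smul_homog hf, hpow, one_mul]
    rw [Finset.sum_congr rfl (fun cp _ => this cp)]
    rw [Fintype.sum_prod_type]
    simp only [Finset.sum_const, Finset.card_univ, Fintype.card_units, hq, nsmul_eq_mul]
  rw [hbij] at hCW
  have hcast : ((q - 1 : ℕ) : F) = -1 := by
    have : ((q : ℕ) : F) = 0 := by rw [← hq]; exact FiniteField.cast_card_eq_zero F
    rw [Nat.cast_sub (by omega), this, Nat.cast_one, zero_sub]
  rw [hcast, neg_one_mul, neg_eq_zero] at hCW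
  exact hCW

end helpers

theorem stmt10 (q n : ℕ) (F : Type*) [Field F] [Fintype F] [DecidableEq F]
    (hq : Fintype.card F = q) (hn : 1 ≤ n) (k : ℕ) (hk1 : 1 ≤ k) (hk2 : 2 * k ≤ n * (q - 1))
    (hkd : (q - 1) ∣ 2 * k) :
    PRM F n k ≤ dualCode (PRM F n k) ∧
      PRM F n k ⊓ dualCode (PRM F n k) = PRM F n k := by
  have hle : PRM F n k ≤ dualCode (PRM F n k) := by
    intro c hc
    obtain ⟨f, hf, rfl⟩ := Submodule.mem_map.mp hc
    intro c' hc'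
    obtain ⟨g, hg, rfl⟩ := Submodule.mem_map.mp hc'
    have hf' := (MvPolynomial.mem_homogeneousSubmodule _ _).mp hf
    have hg' := (MvPolynomial.mem_homogeneousSubmodule _ _).mp hg
    have hfg : (f * g).IsHomogeneous (2 * k) := by
      rw [two_mul]; exact hf'.mul hg'
    have hsum := sum_eval_projPts_eq_zero (n := n) q hq hfg (by omega) hk2 hkd
    calc ∑ p : ProjPts F n, evalOnPts F n f p * evalOnPts F n g p
        = ∑ p : ProjPts F n, MvPolynomial.eval p.1 (f * g) := by
          apply Finset.sum_congr rfl
          intro p _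
          show MvPolynomial.eval p.1 f * MvPolynomial.eval p.1 g = _
          rw [map_mul]
      _ = 0 := hsum
  exact ⟨hle, inf_eq_left.mpr hle⟩
end
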